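/- For every t ∈ [-1,1), τ_n''(1,t) = n²(n²-1)/3 - 2·((1+t)/(1-t))·n² + 2·((1+t)/(1-t)²)·(1 - T_n(t)), where derivatives are in x and τ_n(x,t) = ((1-xt)/(x-t))·(T_n(x)-T_n(t)). -/

import Mathlib

/-!
Apply the Leibniz rule to `g * h` with `g y = (1 - y t) / (y - t) = -t + (1 - t²) / (y - t)` and
`h = T_n - T_n(t)`. At `y = 1` one has `g = 1`, `g' = -(1 + t) / (1 - t)`,
`g'' = 2 (1 + t) / (1 - t)²`, and `h = 1 - T_n(t)`, `h' = n²`, `h'' = n² (n² - 1) / 3`.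
-/

/-- Chebyshev polynomial of the first kind, as a real function. -/
noncomputable def Tch (n : ℕ) (x : ℝ) : ℝ := (Polynomial.Chebyshev.T ℝ n).eval x

open Polynomial Polynomial.Chebyshev

theorem deriv_deriv_mul {𝕜 𝔸 : Type*} [NontriviallyNormedField 𝕜] [NormedRing 𝔸]
    [NormedAlgebra 𝕜 𝔸] {f g : 𝕜 → 𝔸} {x : 𝕜} (hf : ContDiffAt 𝕜 2 f x)
    (hg : ContDiffAt 𝕜 2 g x) :
    deriv (deriv fun y => f y * g y) x =
      f x * deriv (deriv g) x + 2 * deriv f x * deriv g x + deriv (deriv f) x * g x := by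
  simpa [Finset.sum_range_succ, iteratedDeriv_succ] using iteratedDeriv_fun_mul hf hg

section Mobius

variable {𝕜 : Type*} [NontriviallyNormedField 𝕜] {t x : 𝕜}

theorem hasDerivAt_one_sub_mul_div_sub (hx : x ≠ t) :
    HasDerivAt (fun y => (1 - y * t) / (y - t)) ((t ^ 2 - 1) / (x - t) ^ 2) x := by
  have hxt : x - t ≠ 0 := sub_ne_zero.2 hx
  refine ((((hasDerivAt_id' x).mul_const t).const_sub 1).fun_div
    ((hasDerivAt_id' x).sub_const t) hxt).congr_deriv ?_
  field_simp
  ring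

theorem contDiffAt_one_sub_mul_div_sub (hx : x ≠ t) (n : WithTop ℕ∞) :
    ContDiffAt 𝕜 n (fun y => (1 - y * t) / (y - t)) x := by
  fun_prop (disch := exact sub_ne_zero.2 hx)

theorem deriv_deriv_one_sub_mul_div_sub (hx : x ≠ t) :
    deriv (deriv fun y => (1 - y * t) / (y - t)) x = 2 * (1 - t ^ 2) / (x - t) ^ 3 := by
  have hderiv : deriv (fun y => (1 - y * t) / (y - t)) =ᶠ[nhds x]
      fun y => (t ^ 2 - 1) / (y - t) ^ 2 := by
    filter_upwards [isOpen_ne.mem_nhds hx] with y hy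
    exact (hasDerivAt_one_sub_mul_div_sub hy).deriv
  have hxt : x - t ≠ 0 := sub_ne_zero.2 hx
  rw [hderiv.deriv_eq, ((hasDerivAt_const x (t ^ 2 - 1)).fun_div
    (((hasDerivAt_id' x).sub_const t).fun_pow 2) (pow_ne_zero 2 hxt)).deriv]
  field_simp
  ring

end Mobius

theorem derivative_derivative_T_eval_one {𝔽 : Type*} [Field 𝔽] [CharZero 𝔽] (n : ℤ) :
    (derivative (derivative (T 𝔽 n))).eval 1 = n ^ 2 * (n ^ 2 - 1) / 3 := by
  simpa [Finset.prod_range_succ] using iterate_derivative_T_eval_one_eq_div (𝔽 := 𝔽) n 2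

theorem contDiff_Tch (n : ℕ) (k : WithTop ℕ∞) : ContDiff ℝ k (Tch n) :=
  (T ℝ n).contDiff_aeval k

theorem deriv_Tch (n : ℕ) : deriv (Tch n) = fun x => (derivative (T ℝ n)).eval x :=
  funext fun _ => Polynomial.deriv _

theorem Tch_one (n : ℕ) : Tch n 1 = 1 := T_eval_one ℝ n

theorem deriv_Tch_one (n : ℕ) : deriv (Tch n) 1 = (n : ℝ) ^ 2 := by
  simpa [deriv_Tch] using derivative_T_eval_one (R := ℝ) n

theorem deriv_deriv_Tch_one (n : ℕ) :
    deriv (deriv (Tch n)) 1 = (n : ℝ) ^ 2 * ((n : ℝ) ^ 2 - 1) / 3 := by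
  simpa [deriv_Tch, Polynomial.deriv] using derivative_derivative_T_eval_one (𝔽 := ℝ) n

theorem stmt_12_general (n : ℕ) (t : ℝ) (ht : t ∈ Set.Ico (-1 : ℝ) 1) :
    deriv (deriv (fun y : ℝ => (1 - y * t) / (y - t) * (Tch n y - Tch n t))) 1
      = (n : ℝ) ^ 2 * ((n : ℝ) ^ 2 - 1) / 3
        - 2 * ((1 + t) / (1 - t)) * (n : ℝ) ^ 2
        + 2 * ((1 + t) / (1 - t) ^ 2) * (1 - Tch n t) := by
  have h1t : (1 : ℝ) ≠ t := ht.2.ne'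
  have hsub : deriv (fun y => Tch n y - Tch n t) = deriv (Tch n) :=
    funext fun _ => deriv_sub_const _
  rw [deriv_deriv_mul (contDiffAt_one_sub_mul_div_sub h1t 2)
      ((contDiff_Tch n 2).sub contDiff_const).contDiffAt,
    (hasDerivAt_one_sub_mul_div_sub h1t).deriv, deriv_deriv_one_sub_mul_div_sub h1t, hsub,
    Tch_one, deriv_Tch_one, deriv_deriv_Tch_one]
  have h1t' : (1 : ℝ) - t ≠ 0 := sub_ne_zero.2 h1t
  field_simp
  ring

theorem stmt_12 (n : ℕ) (hn : 1 ≤ n) (t : ℝ) (ht : t ∈ Set.Ico (-1 : ℝ) 1) :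
    deriv (deriv (fun y : ℝ => (1 - y * t) / (y - t) * (Tch n y - Tch n t))) 1
      = (n : ℝ) ^ 2 * ((n : ℝ) ^ 2 - 1) / 3
        - 2 * ((1 + t) / (1 - t)) * (n : ℝ) ^ 2
        + 2 * ((1 + t) / (1 - t) ^ 2) * (1 - Tch n t) :=
  stmt_12_general n t ht
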